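/- arXiv:2203.03517 — 3 statements merged into one kernel-verified Lean document; each statement's English description precedes it below -/
import Mathlib

section
/- With the notation of the Ostrowski expansion, if b_ℓ ≥ 1 then −1/a_{ℓ+1} ≤ −q_ℓ δ_ℓ ≤ ε_ℓ(N) ≤ q_ℓ δ_{ℓ+1} ≤ 1/a_{ℓ+1}, where ε_ℓ(N) = q_ℓ ∑_{k=ℓ+1}^{K−1} (−1)^{k+ℓ} b_k δ_k. -/
open Real Filter MeasureTheory

/-- Gauss map -/
noncomputable def gaussMap (x : ℝ) : ℝ := Int.fract x⁻¹

/-- Continued fraction partial quotients of α ∈ (0,1): `cfA α k` is `a_k` for `k ≥ 1`. -/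
noncomputable def cfA (α : ℝ) : ℕ → ℕ
  | 0 => 0
  | n + 1 => (⌊(gaussMap^[n] α)⁻¹⌋).toNat

/-- Denominators of the convergents: `q_0 = 1`, `q_1 = a_1`, `q_{k+2} = a_{k+2} q_{k+1} + q_k`. -/
noncomputable def cfQ (α : ℝ) : ℕ → ℕ
  | 0 => 1
  | 1 => cfA α 1
  | n + 2 => cfA α (n + 2) * cfQ α (n + 1) + cfQ α n

/-- Numerators of the convergents. -/
noncomputable def cfP (α : ℝ) : ℕ → ℤ
  | 0 => 0
  | 1 => 1
  | n + 2 => cfA α (n + 2) * cfP α (n + 1) + cfP α n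

/-- `δ_k = |q_k α - p_k| = ‖q_k α‖`. -/
noncomputable def cfDelta (α : ℝ) (k : ℕ) : ℝ := |(cfQ α k : ℝ) * α - (cfP α k : ℝ)|

/-- Sudler product `P_N(α) = ∏_{r=1}^N |2 sin(π r α)|`. -/
noncomputable def sudler (α : ℝ) (N : ℕ) : ℝ :=
  ∏ r ∈ Finset.Icc 1 N, |2 * Real.sin (Real.pi * r * α)|

/-- Ostrowski digit conditions for a digit sequence `b` of length `K` w.r.t. `α`. -/
def IsOstrowski (α : ℝ) (K : ℕ) (b : ℕ → ℕ) (N : ℕ) : Prop :=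
  N = ∑ ℓ ∈ Finset.range K, b ℓ * cfQ α ℓ ∧
  (∀ ℓ < K, b ℓ ≤ cfA α (ℓ + 1)) ∧
  b 0 < cfA α 1 ∧
  (∀ ℓ, 1 ≤ ℓ → ℓ < K → b ℓ = cfA α (ℓ + 1) → b (ℓ - 1) = 0)

/-- `ε_ℓ(N) = q_ℓ ∑_{k=ℓ+1}^{K-1} (-1)^{k+ℓ} b_k δ_k`. -/
noncomputable def cfEps (α : ℝ) (K : ℕ) (b : ℕ → ℕ) (ℓ : ℕ) : ℝ :=
  (cfQ α ℓ : ℝ) * ∑ k ∈ Finset.Ico (ℓ + 1) K, (-1 : ℝ) ^ (k + ℓ) * (b k : ℝ) * cfDelta α k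

/-!
Write `xₙ = gaussMap^[n] α ∈ (0, 1)`, so that `aₙ₊₁ = ⌊1 / xₙ⌋` and `xₙ₊₁ = 1 / xₙ - aₙ₊₁`.
Then `qₙ₊₁ α - pₙ₊₁ = -xₙ₊₁ (qₙ α - pₙ)`, hence `δₙ₊₁ = xₙ₊₁ δₙ < δₙ` and
`δₙ₊₂ = δₙ - aₙ₊₂ δₙ₊₁`. Peeling off the first term of the alternating sum and using
`0 ≤ bₖ ≤ aₖ₊₁` together with this recurrence shows by downward induction on `ℓ` that
`∑_{k=ℓ+1}^{K-1} (-1)^{k+ℓ} bₖ δₖ ∈ [-δ_ℓ, δ_ℓ₊₁]`. The outer bounds come from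
`q_ℓ₊₁ δ_ℓ + q_ℓ δ_ℓ₊₁ = 1` and `a_ℓ₊₁ q_ℓ ≤ q_ℓ₊₁`.
-/

lemma Irrational.gaussMap {x : ℝ} (hx : Irrational x) : Irrational (gaussMap x) :=
  hx.inv.sub_intCast _

lemma gaussMap_mem_Ioo {x : ℝ} (hx : Irrational x) : gaussMap x ∈ Set.Ioo 0 1 :=
  ⟨(Int.fract_nonneg _).lt_of_ne' hx.gaussMap.ne_zero, Int.fract_lt_one _⟩

lemma Irrational.gaussMap_iterate {x : ℝ} (hx : Irrational x) :
    ∀ n, Irrational (_root_.gaussMap^[n] x)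
  | 0 => hx
  | n + 1 => by
    rw [Function.iterate_succ_apply']
    exact (hx.gaussMap_iterate n).gaussMap

lemma gaussMap_iterate_mem_Ioo {α : ℝ} (hα : α ∈ Set.Ioo 0 1) (hirr : Irrational α) :
    ∀ n, gaussMap^[n] α ∈ Set.Ioo 0 1
  | 0 => hα
  | n + 1 => by
    rw [Function.iterate_succ_apply']
    exact gaussMap_mem_Ioo (hirr.gaussMap_iterate n)

lemma cfA_mul_cfQ_le (α : ℝ) : ∀ n, cfA α (n + 1) * cfQ α n ≤ cfQ α (n + 1)
  | 0 => by simp [cfQ]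
  | n + 1 => Nat.le_add_right _ _

lemma cast_cfQ_add_two (α : ℝ) (n : ℕ) :
    (cfQ α (n + 2) : ℝ) = cfA α (n + 2) * cfQ α (n + 1) + cfQ α n := by
  simp [cfQ]

section ContinuedFraction

variable {α : ℝ} (hx : ∀ n, gaussMap^[n] α ∈ Set.Ioo 0 1)
include hx

lemma cast_cfA_succ (n : ℕ) : (cfA α (n + 1) : ℝ) = ⌊(gaussMap^[n] α)⁻¹⌋ := by
  have : (0 : ℤ) ≤ ⌊(gaussMap^[n] α)⁻¹⌋ := Int.floor_nonneg.mpr (inv_nonneg.mpr (hx n).1.le)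
  exact_mod_cast Int.toNat_of_nonneg this

lemma one_le_cfA_succ (n : ℕ) : (1 : ℝ) ≤ cfA α (n + 1) := by
  have hinv : (1 : ℝ) ≤ (gaussMap^[n] α)⁻¹ := (one_le_inv₀ (hx n).1).mpr (hx n).2.le
  rw [cast_cfA_succ hx]
  exact_mod_cast Int.le_floor.mpr (by exact_mod_cast hinv)

lemma gaussMap_iterate_succ_eq (n : ℕ) :
    gaussMap^[n + 1] α = (gaussMap^[n] α)⁻¹ - cfA α (n + 1) := by
  rw [Function.iterate_succ_apply', gaussMap, Int.fract, cast_cfA_succ hx]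

lemma cfQ_succ_mul_sub_cfP_succ (n : ℕ) :
    (cfQ α (n + 1) : ℝ) * α - cfP α (n + 1) = -gaussMap^[n + 1] α * (cfQ α n * α - cfP α n) := by
  induction n with
  | zero =>
    have hα : α ≠ 0 := (hx 0).1.ne'
    simp only [cfQ, cfP, gaussMap_iterate_succ_eq hx 0, Function.iterate_zero_apply]
    field_simp
    push_cast
    ring
  | succ n ih =>
    have hxn : gaussMap^[n + 1] α ≠ 0 := (hx _).1.ne'
    have hprev : (cfQ α n : ℝ) * α - cfP α n = -(gaussMap^[n + 1] α)⁻¹ *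
        ((cfQ α (n + 1) : ℝ) * α - cfP α (n + 1)) := by
      rw [ih]; field_simp
    have hP : (cfP α (n + 2) : ℝ) = cfA α (n + 2) * cfP α (n + 1) + cfP α n := by
      simp [cfP]
    rw [cast_cfQ_add_two, hP, gaussMap_iterate_succ_eq hx (n + 1)]
    linear_combination hprev

lemma cfDelta_zero : cfDelta α 0 = α := by
  simpa [cfDelta, cfQ, cfP] using (hx 0).1.le

lemma cfDelta_succ (n : ℕ) : cfDelta α (n + 1) = gaussMap^[n + 1] α * cfDelta α n := by
  rw [cfDelta, cfQ_succ_mul_sub_cfP_succ hx, abs_mul, abs_neg, abs_of_pos (hx _).1, cfDelta]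

lemma cfDelta_pos (n : ℕ) : 0 < cfDelta α n := by
  induction n with
  | zero => rw [cfDelta_zero hx]; exact (hx 0).1
  | succ n ih => rw [cfDelta_succ hx]; exact mul_pos (hx _).1 ih

lemma cfDelta_succ_lt (n : ℕ) : cfDelta α (n + 1) < cfDelta α n := by
  rw [cfDelta_succ hx]
  exact mul_lt_of_lt_one_left (cfDelta_pos hx n) (hx _).2

lemma cfDelta_add_two (n : ℕ) :
    cfDelta α (n + 2) = cfDelta α n - cfA α (n + 2) * cfDelta α (n + 1) := by
  have hxn : gaussMap^[n + 1] α ≠ 0 := (hx _).1.ne'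
  rw [cfDelta_succ hx (n + 1), gaussMap_iterate_succ_eq hx (n + 1), cfDelta_succ hx n]
  field_simp

lemma cfQ_succ_mul_cfDelta_add (n : ℕ) :
    (cfQ α (n + 1) : ℝ) * cfDelta α n + cfQ α n * cfDelta α (n + 1) = 1 := by
  induction n with
  | zero =>
    have hα : α ≠ 0 := (hx 0).1.ne'
    rw [cfDelta_succ hx, cfDelta_zero hx, gaussMap_iterate_succ_eq hx 0]
    simp only [cfQ, Function.iterate_zero_apply]
    field_simp
    ring
  | succ n ih =>
    rw [cast_cfQ_add_two, cfDelta_add_two hx, ← ih]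
    ring

lemma cfQ_mul_cfDelta_le_inv_cfA (n : ℕ) : (cfQ α n : ℝ) * cfDelta α n ≤ 1 / cfA α (n + 1) := by
  have ha : (0 : ℝ) < cfA α (n + 1) := one_pos.trans_le (one_le_cfA_succ hx n)
  have hq : (cfA α (n + 1) : ℝ) * cfQ α n ≤ cfQ α (n + 1) := by exact_mod_cast cfA_mul_cfQ_le α n
  rw [le_div_iff₀ ha, ← cfQ_succ_mul_cfDelta_add hx n]
  nlinarith [cfDelta_pos hx n, cfDelta_pos hx (n + 1)]

end ContinuedFraction

noncomputable def altTail (b d : ℕ → ℝ) (K ℓ : ℕ) : ℝ :=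
  ∑ k ∈ Finset.Ico (ℓ + 1) K, (-1 : ℝ) ^ (k + ℓ) * b k * d k

lemma altTail_eq_zero {b d : ℕ → ℝ} {K ℓ : ℕ} (h : K ≤ ℓ + 1) : altTail b d K ℓ = 0 := by
  rw [altTail, Finset.Ico_eq_empty (by omega), Finset.sum_empty]

lemma altTail_eq_sub {b d : ℕ → ℝ} {K ℓ : ℕ} (h : ℓ + 1 < K) :
    altTail b d K ℓ = -(b (ℓ + 1) * d (ℓ + 1)) - altTail b d K (ℓ + 1) := by
  rw [altTail, altTail, Finset.sum_eq_sum_Ico_succ_bot h, sub_eq_add_neg, ← Finset.sum_neg_distrib,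
    Odd.neg_one_pow ⟨ℓ, by ring⟩]
  congr 1
  · ring
  · refine Finset.sum_congr rfl fun k _ => ?_
    rw [show k + (ℓ + 1) = k + ℓ + 1 by ring, pow_succ]
    ring

lemma altTail_mem_Icc {a b d : ℕ → ℝ} {K : ℕ} (hd : ∀ n, 0 ≤ d n)
    (hrec : ∀ n, d (n + 2) = d n - a (n + 2) * d (n + 1))
    (hb0 : ∀ k, 0 ≤ b k) (hba : ∀ k < K, b k ≤ a (k + 1)) (ℓ : ℕ) :
    altTail b d K ℓ ∈ Set.Icc (-d ℓ) (d (ℓ + 1)) := by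
  induction h : K - ℓ using Nat.strong_induction_on generalizing ℓ with
  | _ j ih =>
    rcases lt_or_ge (ℓ + 1) K with hK | hK
    · obtain ⟨hlo, hhi⟩ := ih (K - (ℓ + 1)) (by omega) (ℓ + 1) rfl
      have hterm : b (ℓ + 1) * d (ℓ + 1) ≤ a (ℓ + 2) * d (ℓ + 1) :=
        mul_le_mul_of_nonneg_right (hba _ hK) (hd _)
      rw [altTail_eq_sub hK]
      constructor
      · linarith [hrec ℓ]
      · nlinarith [hb0 (ℓ + 1), hd (ℓ + 1)]
    · rw [altTail_eq_zero hK]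
      exact ⟨neg_nonpos.mpr (hd ℓ), hd (ℓ + 1)⟩

theorem eps_bounds_refined (α : ℝ) (hα : α ∈ Set.Ioo (0:ℝ) 1) (hirr : Irrational α)
    (K N : ℕ) (b : ℕ → ℕ) (hb : IsOstrowski α K b N) :
    ∀ ℓ < K, 1 ≤ b ℓ →
      -(1 / (cfA α (ℓ+1) : ℝ)) ≤ -((cfQ α ℓ : ℝ) * cfDelta α ℓ) ∧
      -((cfQ α ℓ : ℝ) * cfDelta α ℓ) ≤ cfEps α K b ℓ ∧
      cfEps α K b ℓ ≤ (cfQ α ℓ : ℝ) * cfDelta α (ℓ+1) ∧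
      (cfQ α ℓ : ℝ) * cfDelta α (ℓ+1) ≤ 1 / (cfA α (ℓ+1) : ℝ) := by
  intro ℓ _ _
  have hx := gaussMap_iterate_mem_Ioo hα hirr
  have hq : (0 : ℝ) ≤ cfQ α ℓ := Nat.cast_nonneg _
  obtain ⟨hlo, hhi⟩ := altTail_mem_Icc (a := fun n => (cfA α n : ℝ)) (b := fun k => (b k : ℝ))
    (fun n => (cfDelta_pos hx n).le) (cfDelta_add_two hx) (fun k => Nat.cast_nonneg _)
    (fun k hk => by exact_mod_cast hb.2.1 k hk) ℓ
  have hεq : cfEps α K b ℓ = cfQ α ℓ * altTail (fun k => (b k : ℝ)) (cfDelta α) K ℓ := rfl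
  have hδ := cfQ_mul_cfDelta_le_inv_cfA hx ℓ
  refine ⟨neg_le_neg hδ, ?_, ?_, ?_⟩
  · rw [hεq, ← mul_neg]; exact mul_le_mul_of_nonneg_left hlo hq
  · rw [hεq]; exact mul_le_mul_of_nonneg_left hhi hq
  · exact (mul_le_mul_of_nonneg_left (cfDelta_succ_lt hx ℓ).le hq).trans hδ
end

section
/- Fix K ≥ 1 and an index ℓ₀ with 1 ≤ ℓ₀ ≤ K. For N < q_K with Ostrowski digits (b_0, …, b_{K−1}), let M⁺ = {N ≤ M : b_{ℓ₀−1}(N) ≥ a_{ℓ₀}/2} and M⁻ = {N ≤ M : b_{ℓ₀−1}(N) ≤ a_{ℓ₀}/2} for a fixed integer M with q_{K−1} ≤ M < q_K. Then the map sending N = ∑ b_ℓ q_ℓ ∈ M⁺ to ∑ b̃_ℓ q_ℓ, where b̃_{ℓ₀−1} = a_{ℓ₀} − b_{ℓ₀−1} and b̃_ℓ = b_ℓ otherwise, is a well-defined injection from M⁺ into M⁻; consequently |M⁻| ≥ M/2. -/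
open Real Filter MeasureTheory

/-!
If `a_{ℓ₀} ≤ 2 b_{ℓ₀-1}`, replacing the digit `b_{ℓ₀-1}` by `a_{ℓ₀} - b_{ℓ₀-1}` lowers it, and
lowering digits preserves the Ostrowski conditions (a digit can only become maximal if it already
was). So the reflected digits are the Ostrowski expansion of an integer `f N ≤ N ≤ M`, whose
digits are then known by uniqueness of the expansion; uniqueness holds because a valid digit
string of length `k` sums to less than `q_k`. Reflection is an involution on digits, so `f` is its
own left inverse on `M⁺` and hence injective, and as `M⁺ ∪ M⁻ = {0, …, M}` this gives
`2 |M⁻| ≥ M + 1`.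
-/

open Finset

noncomputable def ostrowskiVal (α : ℝ) (K : ℕ) (c : ℕ → ℕ) : ℕ := ∑ ℓ ∈ range K, c ℓ * cfQ α ℓ

theorem ostrowskiVal_succ (α : ℝ) (K : ℕ) (c : ℕ → ℕ) :
    ostrowskiVal α (K + 1) c = ostrowskiVal α K c + c K * cfQ α K :=
  sum_range_succ _ _

theorem ostrowskiVal_congr {α : ℝ} {K : ℕ} {b c : ℕ → ℕ} (h : ∀ ℓ < K, b ℓ = c ℓ) :
    ostrowskiVal α K b = ostrowskiVal α K c :=
  sum_congr rfl fun ℓ hℓ => by rw [h ℓ (mem_range.1 hℓ)]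

namespace IsOstrowski

variable {α : ℝ} {K N : ℕ} {b c : ℕ → ℕ}

theorem val_eq (h : IsOstrowski α K b N) : N = ostrowskiVal α K b := h.1

theorem of_succ (h : IsOstrowski α (K + 1) b N) : IsOstrowski α K b (ostrowskiVal α K b) :=
  ⟨rfl, fun ℓ hℓ => h.2.1 ℓ (by omega), h.2.2.1, fun ℓ h₁ h₂ => h.2.2.2 ℓ h₁ (by omega)⟩

theorem lt_cfQ : ∀ {K N : ℕ}, IsOstrowski α K b N → N < cfQ α K
  | 0, _, h => by simp [h.1, cfQ]
  | 1, _, h => by simpa [h.1, cfQ] using h.2.2.1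
  | K + 2, N, h => by
    have hlow : ostrowskiVal α (K + 1) b < cfQ α (K + 1) := lt_cfQ h.of_succ
    have hq : cfQ α (K + 2) = cfA α (K + 2) * cfQ α (K + 1) + cfQ α K := rfl
    rw [h.val_eq, ostrowskiVal_succ, hq]
    have hdig : b (K + 1) ≤ cfA α (K + 2) := h.2.1 (K + 1) (by omega)
    rcases hdig.lt_or_eq with hlt | heq
    · -- the top digit is below `a_{K+2}`, so `(b_{K+1} + 1) q_{K+1} ≤ q_{K+2}`
      have := Nat.mul_le_mul_right (cfQ α (K + 1)) hlt
      rw [Nat.succ_mul] at this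
      omega
    · -- the top digit is maximal, so the digit below it vanishes
      have hK : b K = 0 := h.2.2.2 (K + 1) (by omega) (by omega) heq
      have hval : ostrowskiVal α (K + 1) b = ostrowskiVal α K b := by
        rw [ostrowskiVal_succ, hK, zero_mul, add_zero]
      have := lt_cfQ h.of_succ.of_succ
      rw [hval, heq]
      omega

theorem digits_eq : ∀ {K N : ℕ}, IsOstrowski α K b N → IsOstrowski α K c N → ∀ ℓ < K, b ℓ = c ℓ
  | 0, _, _, _ => by simp
  | K + 1, N, hb, hc => by
    have hbK := hb.of_succ.lt_cfQ
    have hcK := hc.of_succ.lt_cfQ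
    have hq : 0 < cfQ α K := by omega
    -- both expansions split `N` as remainder plus quotient modulo `q_K`
    obtain ⟨hbdiv, hbmod⟩ := (Nat.div_mod_unique (a := N) (d := b K) hq).2
      ⟨by rw [hb.val_eq, ostrowskiVal_succ, mul_comm], hbK⟩
    obtain ⟨hcdiv, hcmod⟩ := (Nat.div_mod_unique (a := N) (d := c K) hq).2
      ⟨by rw [hc.val_eq, ostrowskiVal_succ, mul_comm], hcK⟩
    have hlow := digits_eq hb.of_succ (hbmod.symm.trans hcmod ▸ hc.of_succ)
    intro ℓ hℓ
    rcases (Nat.lt_succ_iff.1 hℓ).lt_or_eq with hlt | rfl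
    · exact hlow ℓ hlt
    · exact hbdiv.symm.trans hcdiv

theorem val_le (h : IsOstrowski α K b N) (hcb : ∀ ℓ, c ℓ ≤ b ℓ) : ostrowskiVal α K c ≤ N :=
  h.val_eq ▸ sum_le_sum fun ℓ _ => Nat.mul_le_mul_right _ (hcb ℓ)

theorem of_le (h : IsOstrowski α K b N) (hcb : ∀ ℓ, c ℓ ≤ b ℓ) :
    IsOstrowski α K c (ostrowskiVal α K c) := by
  refine ⟨rfl, fun ℓ hℓ => (hcb ℓ).trans (h.2.1 ℓ hℓ), (hcb 0).trans_lt h.2.2.1,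
    fun ℓ h₁ h₂ hcℓ => ?_⟩
  have hbℓ : b ℓ = cfA α (ℓ + 1) := le_antisymm (h.2.1 ℓ h₂) (hcℓ ▸ hcb ℓ)
  exact Nat.eq_zero_of_le_zero (h.2.2.2 ℓ h₁ h₂ hbℓ ▸ hcb (ℓ - 1))

theorem digits_val_of_le {M : ℕ} {B : ℕ → ℕ → ℕ}
    (hB : ∀ N ≤ M, IsOstrowski α K (B N) N) (hN : N ≤ M) (hc : ∀ ℓ, c ℓ ≤ B N ℓ) :
    ostrowskiVal α K c ≤ N ∧ ∀ ℓ < K, B (ostrowskiVal α K c) ℓ = c ℓ := by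
  have hle := (hB N hN).val_le hc
  exact ⟨hle, (hB _ (hle.trans hN)).digits_eq ((hB N hN).of_le hc)⟩

end IsOstrowski

def reflectDigit (j a : ℕ) (b : ℕ → ℕ) (ℓ : ℕ) : ℕ := if ℓ = j then a - b ℓ else b ℓ

section reflectDigit

variable {j a : ℕ} {b c : ℕ → ℕ}

@[simp]
theorem reflectDigit_self : reflectDigit j a b j = a - b j := if_pos rfl

theorem reflectDigit_of_ne {ℓ : ℕ} (h : ℓ ≠ j) : reflectDigit j a b ℓ = b ℓ := if_neg h

theorem reflectDigit_le (h : a ≤ 2 * b j) (ℓ : ℕ) : reflectDigit j a b ℓ ≤ b ℓ := by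
  by_cases hℓ : ℓ = j
  · subst hℓ; rw [reflectDigit_self]; omega
  · rw [reflectDigit_of_ne hℓ]

theorem reflectDigit_reflectDigit (h : b j ≤ a) : reflectDigit j a (reflectDigit j a b) = b := by
  funext ℓ
  by_cases hℓ : ℓ = j
  · subst hℓ; simp only [reflectDigit_self]; omega
  · simp only [reflectDigit_of_ne hℓ]

theorem reflectDigit_congr {K : ℕ} (h : ∀ ℓ < K, b ℓ = c ℓ) :
    ∀ ℓ < K, reflectDigit j a b ℓ = reflectDigit j a c ℓ := fun ℓ hℓ => by
  simp only [reflectDigit, h ℓ hℓ]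

end reflectDigit

theorem natCast_div_two_le_iff {a b : ℕ} : (a : ℝ) / 2 ≤ b ↔ a ≤ 2 * b := by
  rw [div_le_iff₀ two_pos]; norm_cast; omega

theorem le_natCast_div_two_iff {a b : ℕ} : (b : ℝ) ≤ a / 2 ↔ 2 * b ≤ a := by
  rw [le_div_iff₀ two_pos]; norm_cast; omega

theorem half_card_le_card_of_injOn {ι : Type*} [DecidableEq ι] {u s t : Finset ι} (f : ι → ι)
    (hu : u ⊆ s ∪ t) (hf : Set.MapsTo f s t) (hinj : Set.InjOn f s) :
    (u.card : ℝ) / 2 ≤ t.card := by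
  have h₁ := (card_le_card hu).trans (card_union_le s t)
  have h₂ := card_le_card_of_injOn f hf hinj
  rw [div_le_iff₀ two_pos]; norm_cast; omega

theorem ostrowski_reflection_injection_general (α : ℝ) (K ℓ₀ M : ℕ) (hℓ₀ : 1 ≤ ℓ₀) (hℓ₀K : ℓ₀ ≤ K)
    (b : ℕ → ℕ → ℕ) (hb : ∀ N ≤ M, IsOstrowski α K (b N) N) :
    let f : ℕ → ℕ := fun N => ∑ ℓ ∈ Finset.range K,
      (if ℓ = ℓ₀ - 1 then cfA α ℓ₀ - b N ℓ else b N ℓ) * cfQ α ℓ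
    let Mplus := (Finset.range (M+1)).filter
      (fun N => (cfA α ℓ₀ : ℝ) / 2 ≤ (b N (ℓ₀ - 1) : ℝ))
    let Mminus := (Finset.range (M+1)).filter
      (fun N => (b N (ℓ₀ - 1) : ℝ) ≤ (cfA α ℓ₀ : ℝ) / 2)
    (∀ N ∈ Mplus, f N ∈ Mminus) ∧ Set.InjOn f ↑Mplus ∧ (M : ℝ) / 2 ≤ (Mminus.card : ℝ) := by
  intro f Mplus Mminus
  have hj : ℓ₀ - 1 < K := by omega
  have mem_plus (N : ℕ) : N ∈ Mplus ↔ N ≤ M ∧ cfA α ℓ₀ ≤ 2 * b N (ℓ₀ - 1) := by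
    simp only [Mplus, mem_filter, mem_range, Nat.lt_succ_iff, natCast_div_two_le_iff]
  have mem_minus (N : ℕ) : N ∈ Mminus ↔ N ≤ M ∧ 2 * b N (ℓ₀ - 1) ≤ cfA α ℓ₀ := by
    simp only [Mminus, mem_filter, mem_range, Nat.lt_succ_iff, le_natCast_div_two_iff]
  have digits_f (N : ℕ) (hN : N ∈ Mplus) :
      f N ≤ M ∧ ∀ ℓ < K, b (f N) ℓ = reflectDigit (ℓ₀ - 1) (cfA α ℓ₀) (b N) ℓ := by
    obtain ⟨hNM, hbN⟩ := (mem_plus N).1 hN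
    obtain ⟨hle, hdig⟩ := IsOstrowski.digits_val_of_le hb hNM (reflectDigit_le hbN)
    exact ⟨hle.trans hNM, hdig⟩
  have maps : Set.MapsTo f Mplus Mminus := fun N hN => by
    obtain ⟨hfM, hdig⟩ := digits_f N hN
    rw [Finset.mem_coe, mem_minus, hdig _ hj, reflectDigit_self]
    exact ⟨hfM, by have := ((mem_plus N).1 hN).2; omega⟩
  have inv : Set.LeftInvOn f f Mplus := fun N hN => by
    obtain ⟨hNM, -⟩ := (mem_plus N).1 hN
    have hbN : b N (ℓ₀ - 1) ≤ cfA α ℓ₀ := by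
      simpa [Nat.sub_add_cancel hℓ₀] using (hb N hNM).2.1 _ hj
    calc f (f N) = ostrowskiVal α K (reflectDigit (ℓ₀ - 1) (cfA α ℓ₀)
          (reflectDigit (ℓ₀ - 1) (cfA α ℓ₀) (b N))) :=
        ostrowskiVal_congr (reflectDigit_congr (digits_f N hN).2)
      _ = N := by rw [reflectDigit_reflectDigit hbN, ← (hb N hNM).val_eq]
  refine ⟨maps, inv.injOn, ?_⟩
  have hcover : range (M + 1) ⊆ Mplus ∪ Mminus := fun N hN => by
    have := mem_range.1 hN
    rw [mem_union, mem_plus, mem_minus]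
    omega
  have hhalf := half_card_le_card_of_injOn f hcover maps inv.injOn
  rw [card_range, Nat.cast_succ] at hhalf
  linarith

theorem ostrowski_reflection_injection (α : ℝ) (hα : α ∈ Set.Ioo (0:ℝ) 1)
    (hirr : Irrational α) (K ℓ₀ M : ℕ) (hK : 1 ≤ K) (hℓ₀ : 1 ≤ ℓ₀) (hℓ₀K : ℓ₀ ≤ K)
    (hM1 : cfQ α (K-1) ≤ M) (hM2 : M < cfQ α K)
    (b : ℕ → ℕ → ℕ) (hb : ∀ N ≤ M, IsOstrowski α K (b N) N) :
    let f : ℕ → ℕ := fun N => ∑ ℓ ∈ Finset.range K,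
      (if ℓ = ℓ₀ - 1 then cfA α ℓ₀ - b N ℓ else b N ℓ) * cfQ α ℓ
    let Mplus := (Finset.range (M+1)).filter
      (fun N => (cfA α ℓ₀ : ℝ) / 2 ≤ (b N (ℓ₀ - 1) : ℝ))
    let Mminus := (Finset.range (M+1)).filter
      (fun N => (b N (ℓ₀ - 1) : ℝ) ≤ (cfA α ℓ₀ : ℝ) / 2)
    (∀ N ∈ Mplus, f N ∈ Mminus) ∧ Set.InjOn f ↑Mplus ∧ (M : ℝ) / 2 ≤ (Mminus.card : ℝ) :=
  ostrowski_reflection_injection_general α K ℓ₀ M hℓ₀ hℓ₀K b hb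
end

section
/- Suppose for an irrational α and a function ψ the reflection identity |log P_N(α) + log P_{q_K−N−1}(α) − log q_K| ≤ E_K holds for all 0 ≤ N < q_K, where E_K + log q_K < ψ(K) for all large K. If limsup_{K→∞} #{0 ≤ N < q_K : log P_N(α) ≤ −2ψ(K)}/q_K ≥ 1/2, then also limsup_{K→∞} #{0 ≤ N < q_K : log P_N(α) ≥ ψ(K)}/q_K ≥ 1/2. -/
open Real Filter MeasureTheory

/-!
The reflection `N ↦ q_K - N - 1` is an involution of `{0, …, q_K - 1}`. If `log P_N ≤ -2ψ(K)`,
the reflection identity forces `log P_{q_K-N-1} ≥ log q_K - E_K + 2ψ(K) ≥ ψ(K)`, the last step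
because `E_K + log q_K < ψ(K)` and `log q_K ≥ 0`. So at every large `K` the reflection injects
the set of very small products into the set of large ones; the densities, and hence their
upper limits, compare accordingly.
-/

noncomputable def rangeDensity (n : ℕ) (p : ℕ → Prop) [DecidablePred p] : ℝ :=
  ((Finset.range n).filter p).card / (n : ℝ)

lemma rangeDensity_nonneg (n : ℕ) (p : ℕ → Prop) [DecidablePred p] : 0 ≤ rangeDensity n p := by
  unfold rangeDensity
  positivity

lemma rangeDensity_le_one (n : ℕ) (p : ℕ → Prop) [DecidablePred p] : rangeDensity n p ≤ 1 := by
  unfold rangeDensity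
  apply div_le_one_of_le₀ _ n.cast_nonneg
  exact_mod_cast (Finset.card_filter_le _ _).trans_eq (Finset.card_range n)

lemma rangeDensity_le_of_reflect (n : ℕ) (p q : ℕ → Prop) [DecidablePred p] [DecidablePred q]
    (h : ∀ N < n, p N → q (n - N - 1)) : rangeDensity n p ≤ rangeDensity n q := by
  unfold rangeDensity
  refine div_le_div_of_nonneg_right ?_ n.cast_nonneg
  norm_cast
  apply Finset.card_le_card_of_injOn (fun N => n - N - 1)
  · intro N hN
    simp only [Finset.coe_filter, Finset.mem_range, Set.mem_ofPred_eq] at hN ⊢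
    exact ⟨by omega, h N hN.1 hN.2⟩
  · intro a ha b hb hab
    simp only [Finset.coe_filter, Finset.mem_range, Set.mem_ofPred_eq] at ha hb hab
    omega

lemma limsup_rangeDensity_mono {n : ℕ → ℕ} {p q : ℕ → ℕ → Prop}
    [∀ K, DecidablePred (p K)] [∀ K, DecidablePred (q K)]
    (h : ∀ᶠ K in atTop, rangeDensity (n K) (p K) ≤ rangeDensity (n K) (q K)) :
    limsup (fun K => rangeDensity (n K) (p K)) atTop ≤
      limsup (fun K => rangeDensity (n K) (q K)) atTop :=
  limsup_le_limsup h
    (isCoboundedUnder_le_of_le atTop fun _ => rangeDensity_nonneg _ _)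
    (isBoundedUnder_of ⟨1, fun _ => rangeDensity_le_one _ _⟩)

lemma le_of_abs_add_sub_le {a b L E ψ : ℝ} (hL : 0 ≤ L) (hab : |a + b - L| ≤ E)
    (hψ : E + L < ψ) (ha : a ≤ -(2 * ψ)) : ψ ≤ b := by
  linarith [(abs_le.mp hab).1]

theorem reflection_transfer_general (α : ℝ)
    (ψ E : ℕ → ℝ)
    (hrefl : ∀ K : ℕ, ∀ N < cfQ α K,
      |Real.log (sudler α N) + Real.log (sudler α (cfQ α K - N - 1))
        - Real.log (cfQ α K : ℝ)| ≤ E K)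
    (hE : ∀ᶠ K in Filter.atTop, E K + Real.log (cfQ α K : ℝ) < ψ K)
    (hlim : (1:ℝ)/2 ≤ Filter.limsup (fun K : ℕ =>
      (((Finset.range (cfQ α K)).filter
        (fun N => Real.log (sudler α N) ≤ -(2 * ψ K))).card : ℝ) / (cfQ α K : ℝ))
      Filter.atTop) :
    (1:ℝ)/2 ≤ Filter.limsup (fun K : ℕ =>
      (((Finset.range (cfQ α K)).filter
        (fun N => ψ K ≤ Real.log (sudler α N))).card : ℝ) / (cfQ α K : ℝ))
      Filter.atTop := by
  refine hlim.trans (limsup_rangeDensity_mono ?_)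
  filter_upwards [hE] with K hK
  exact rangeDensity_le_of_reflect _ _ _ fun N hN hsmall =>
    le_of_abs_add_sub_le (Real.log_natCast_nonneg _) (hrefl K N hN) hK hsmall

theorem reflection_transfer (α : ℝ) (hα : α ∈ Set.Ioo (0:ℝ) 1) (hirr : Irrational α)
    (ψ E : ℕ → ℝ)
    (hrefl : ∀ K : ℕ, ∀ N < cfQ α K,
      |Real.log (sudler α N) + Real.log (sudler α (cfQ α K - N - 1))
        - Real.log (cfQ α K : ℝ)| ≤ E K)
    (hE : ∀ᶠ K in Filter.atTop, E K + Real.log (cfQ α K : ℝ) < ψ K)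
    (hlim : (1:ℝ)/2 ≤ Filter.limsup (fun K : ℕ =>
      (((Finset.range (cfQ α K)).filter
        (fun N => Real.log (sudler α N) ≤ -(2 * ψ K))).card : ℝ) / (cfQ α K : ℝ))
      Filter.atTop) :
    (1:ℝ)/2 ≤ Filter.limsup (fun K : ℕ =>
      (((Finset.range (cfQ α K)).filter
        (fun N => ψ K ≤ Real.log (sudler α N))).card : ℝ) / (cfQ α K : ℝ))
      Filter.atTop :=
  reflection_transfer_general α ψ E hrefl hE hlim
end
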